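/- Let Φ : ℝ^d → [0,∞) be an N_∞ function, λ > 0, and let u ∈ L^Φ([0,T],ℝ^d) satisfy d(u, L^∞) < λ, where d(u, L^∞) = inf{‖u − v‖_{L^Φ} : v ∈ L^∞([0,T],ℝ^d)}. If (u_n) is a sequence in L^Φ with ‖u_n − u‖_{L^Φ} → 0, then there exist a subsequence (u_{n_k}) and a function h ∈ L^1([0,T],ℝ) such that u_{n_k}(t) → u(t) for a.e. t ∈ [0,T] and Φ(u_{n_k}(t)/λ) ≤ h(t) for a.e. t ∈ [0,T] and every k. -/

import Mathlib

/-!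
Choose a bounded `v` with `‖u - v‖ < μ < λ` and write `λ = μ + δ`. Convexity gives
`Φ (u_n / λ) ≤ (μ / λ) Φ ((u - v) / μ) + (δ / 2λ) (Φ (2v / δ) + Φ (2 (u_n - u) / δ))`,
where the first term is integrable (its modular is at most `1`) and the second is bounded.
Along a subsequence with `‖u_{n_k} - u‖ < 2⁻ᵏ δ / 2`, the functions
`z_k = (u_{n_k} - u) / (2⁻ᵏ δ / 2)` have modular at most `1`, so the last term
`Φ (2⁻ᵏ z_k) ≤ 2⁻ᵏ Φ (z_k)` is dominated by the integrable series `∑ₖ Φ (2⁻ᵏ z_k)`.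
The terms of that series tend to `0` a.e., and as `Φ` is bounded below by a positive constant
off every ball around `0`, this forces `u_{n_k} → u` a.e.
-/

open MeasureTheory Filter Set
open scoped ENNReal RealInnerProductSpace Topology

noncomputable section

/-- `ℝ^d` with the euclidean norm. -/
abbrev Ed (d : ℕ) : Type := EuclideanSpace ℝ (Fin d)

/-- `Φ` is an `N_∞` function: differentiable, convex, nonnegative, vanishing exactly at `0`,
even, and superlinear at infinity. -/
def IsNInf {m : ℕ} (Φ : Ed m → ℝ) : Prop :=
  Differentiable ℝ Φ ∧ ConvexOn ℝ Set.univ Φ ∧ (∀ y, 0 ≤ Φ y) ∧ Φ 0 = 0 ∧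
    (∀ y, y ≠ 0 → 0 < Φ y) ∧ (∀ y, Φ (-y) = Φ y) ∧
    Tendsto (fun y => Φ y / ‖y‖) (comap (fun y : Ed m => ‖y‖) atTop) atTop

variable {d : ℕ}

/-- The modular `ρ_Φ(u) = ∫_0^T Φ(u(t)) dt`, as an extended nonnegative real. -/
def rhoE (T : ℝ) (Φ : Ed d → ℝ) (u : ℝ → Ed d) : ℝ≥0∞ :=
  ∫⁻ t in Icc (0:ℝ) T, ENNReal.ofReal (Φ (u t))

/-- `u ∈ L^Φ([0,T], ℝ^d)`. -/
def MemLphi (T : ℝ) (Φ : Ed d → ℝ) (u : ℝ → Ed d) : Prop :=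
  AEMeasurable u (volume.restrict (Icc (0:ℝ) T)) ∧
    ∃ l : ℝ, 0 < l ∧ rhoE T Φ (fun t => l • u t) < ⊤

/-- The Luxemburg norm of `u` on `[0,T]`. -/
def luxNorm (T : ℝ) (Φ : Ed d → ℝ) (u : ℝ → Ed d) : ℝ :=
  sInf {l : ℝ | 0 < l ∧ rhoE T Φ (fun t => l⁻¹ • u t) ≤ 1}

/-- `u ∈ W^1L^Φ([0,T], ℝ^d)` with a.e. derivative `u'` : `u` is absolutely continuous,
being the integral of the (integrable) function `u'`, and `u' ∈ L^Φ`. -/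
def MemW1Lphi (T : ℝ) (Φ : Ed d → ℝ) (u u' : ℝ → Ed d) : Prop :=
  IntegrableOn u' (Icc (0:ℝ) T) ∧ MemLphi T Φ u' ∧
    ∀ t ∈ Icc (0:ℝ) T, u t = u 0 + ∫ s in (0:ℝ)..t, u' s

/-- The Luxemburg distance from `u` to `L^∞([0,T],ℝ^d)`. -/
def distLinf (T : ℝ) (Φ : Ed d → ℝ) (u : ℝ → Ed d) : ℝ :=
  sInf {r : ℝ | ∃ v : ℝ → Ed d, Measurable v ∧ (∃ C : ℝ, ∀ t, ‖v t‖ ≤ C) ∧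
    r = luxNorm T Φ (fun t => u t - v t)}

section ConvexFunction

variable {E : Type*}

theorem ConvexOn.map_smul_le_of_map_zero [AddCommGroup E] [Module ℝ E] {Φ : E → ℝ}
    (hΦ : ConvexOn ℝ univ Φ) (h0 : Φ 0 = 0) {s : ℝ} (hs0 : 0 ≤ s) (hs1 : s ≤ 1) (x : E) :
    Φ (s • x) ≤ s * Φ x := by
  simpa [h0] using hΦ.2 (mem_univ x) (mem_univ 0) hs0 (sub_nonneg.2 hs1) (add_sub_cancel s 1)

theorem ConvexOn.map_inv_smul_add_le [AddCommGroup E] [Module ℝ E] {Φ : E → ℝ}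
    (hΦ : ConvexOn ℝ univ Φ) {α β : ℝ} (hα : 0 < α) (hβ : 0 < β) (x y : E) :
    Φ ((α + β)⁻¹ • (x + y)) ≤ α / (α + β) * Φ (α⁻¹ • x) + β / (α + β) * Φ (β⁻¹ • y) := by
  have hsplit :
      (α + β)⁻¹ • (x + y) = (α / (α + β)) • (α⁻¹ • x) + (β / (α + β)) • (β⁻¹ • y) := by
    match_scalars <;> field_simp
  rw [hsplit]
  exact hΦ.2 (mem_univ _) (mem_univ _) (by positivity) (by positivity) (by field_simp)

theorem ConvexOn.map_inv_smul_add_add_le [AddCommGroup E] [Module ℝ E] {Φ : E → ℝ}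
    (hΦ : ConvexOn ℝ univ Φ) {μ δ : ℝ} (hμ : 0 < μ) (hδ : 0 < δ) (x y z : E) :
    Φ ((μ + δ)⁻¹ • (x + y + z)) ≤ μ / (μ + δ) * Φ (μ⁻¹ • x)
      + δ / (μ + δ) * ((Φ ((δ / 2)⁻¹ • y) + Φ ((δ / 2)⁻¹ • z)) / 2) := by
  have hyz := hΦ.map_inv_smul_add_le (half_pos hδ) (half_pos hδ) y z
  rw [add_halves, show δ / 2 / δ = 2⁻¹ by field_simp] at hyz
  calc Φ ((μ + δ)⁻¹ • (x + y + z)) = Φ ((μ + δ)⁻¹ • (x + (y + z))) := by rw [add_assoc]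
    _ ≤ μ / (μ + δ) * Φ (μ⁻¹ • x) + δ / (μ + δ) * Φ (δ⁻¹ • (y + z)) :=
      hΦ.map_inv_smul_add_le hμ hδ x (y + z)
    _ ≤ _ := by gcongr; linarith

theorem Continuous.exists_forall_le_of_norm_le [NormedAddCommGroup E] [ProperSpace E]
    {Φ : E → ℝ} (hΦ : Continuous Φ) (r : ℝ) : ∃ M, ∀ x, ‖x‖ ≤ r → Φ x ≤ M := by
  obtain ⟨M, hM⟩ :=
    (isCompact_closedBall (0 : E) r).exists_bound_of_continuousOn hΦ.continuousOn
  exact ⟨M, fun x hx => (le_abs_self _).trans (hM x (mem_closedBall_zero_iff.2 hx))⟩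

variable [NormedAddCommGroup E] [NormedSpace ℝ E] [ProperSpace E] {Φ : E → ℝ}

/-- Rescaling onto the sphere of radius `ε` can only decrease `Φ`, and `Φ` has a positive
minimum on that compact sphere. -/
theorem ConvexOn.exists_pos_le_of_le_norm (hΦ : ConvexOn ℝ univ Φ) (hcont : Continuous Φ)
    (h0 : Φ 0 = 0) (hpos : ∀ x, x ≠ 0 → 0 < Φ x) {ε : ℝ} (hε : 0 < ε) :
    ∃ c > 0, ∀ x, ε ≤ ‖x‖ → c ≤ Φ x := by
  have hproj : ∀ x, ε ≤ ‖x‖ →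
      (ε / ‖x‖) • x ∈ Metric.sphere (0 : E) ε ∧ Φ ((ε / ‖x‖) • x) ≤ Φ x := by
    intro x hx
    have hx0 : 0 < ‖x‖ := hε.trans_le hx
    have hs1 : ε / ‖x‖ ≤ 1 := (div_le_one hx0).2 hx
    refine ⟨?_, ?_⟩
    · rw [mem_sphere_zero_iff_norm, norm_smul, Real.norm_of_nonneg (by positivity),
        div_mul_cancel₀ _ hx0.ne']
    · have hΦx : 0 < Φ x := hpos x (norm_pos_iff.1 hx0)
      calc Φ ((ε / ‖x‖) • x) ≤ ε / ‖x‖ * Φ x :=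
            hΦ.map_smul_le_of_map_zero h0 (by positivity) hs1 x
        _ ≤ Φ x := mul_le_of_le_one_left hΦx.le hs1
  rcases (Metric.sphere (0 : E) ε).eq_empty_or_nonempty with hempty | hne
  · exact ⟨1, one_pos, fun x hx => absurd (hproj x hx).1 (by simp [hempty])⟩
  · obtain ⟨x₀, hx₀, hmin⟩ :=
      (isCompact_sphere (0 : E) ε).exists_isMinOn hne hcont.continuousOn
    exact ⟨Φ x₀, hpos x₀ (ne_zero_of_mem_sphere hε.ne' ⟨x₀, hx₀⟩),
      fun x hx => (hmin (hproj x hx).1).trans (hproj x hx).2⟩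

theorem ConvexOn.tendsto_zero_of_tendsto_map (hΦ : ConvexOn ℝ univ Φ) (hcont : Continuous Φ)
    (h0 : Φ 0 = 0) (hpos : ∀ x, x ≠ 0 → 0 < Φ x) {ι : Type*} {l : Filter ι} {y : ι → E}
    (hy : Tendsto (fun i => Φ (y i)) l (𝓝 0)) : Tendsto y l (𝓝 0) := by
  rw [NormedAddGroup.tendsto_nhds_zero]
  intro ε hε
  obtain ⟨c, hc, hcle⟩ := hΦ.exists_pos_le_of_le_norm hcont h0 hpos hε
  filter_upwards [hy.eventually_lt_const hc] with i hi
  exact not_le.1 fun hle => (hcle _ hle).not_gt hi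

end ConvexFunction

theorem exists_integrable_majorant_of_tsum_lintegral_ne_top {α : Type*} [MeasurableSpace α]
    {μ : Measure α} {F : ℕ → α → ℝ≥0∞} (hF : ∀ k, AEMeasurable (F k) μ)
    (hsum : ∑' k, ∫⁻ a, F k a ∂μ ≠ ⊤) :
    ∃ g : α → ℝ, Integrable g μ ∧ ∀ᵐ a ∂μ,
      (∀ k, (F k a).toReal ≤ g a) ∧ Tendsto (fun k => (F k a).toReal) atTop (𝓝 0) := by
  have hGm : AEMeasurable (fun a => ∑' k, F k a) μ := by fun_prop
  have hG : ∫⁻ a, ∑' k, F k a ∂μ ≠ ⊤ := by rwa [lintegral_tsum hF]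
  refine ⟨fun a => (∑' k, F k a).toReal, integrable_toReal_of_lintegral_ne_top hGm hG, ?_⟩
  filter_upwards [ae_lt_top' hGm hG] with a ha
  refine ⟨fun k => ENNReal.toReal_mono ha.ne (ENNReal.le_tsum k), ?_⟩
  simpa only [Function.comp_def, ENNReal.toReal_zero] using
    (ENNReal.tendsto_toReal ENNReal.zero_ne_top).comp
      (ENNReal.tendsto_atTop_zero_of_tsum_ne_top ha.ne)

namespace IsNInf

variable {Φ : Ed d → ℝ}

theorem continuous (hΦ : IsNInf Φ) : Continuous Φ := hΦ.1.continuous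

theorem convexOn (hΦ : IsNInf Φ) : ConvexOn ℝ univ Φ := hΦ.2.1

theorem nonneg (hΦ : IsNInf Φ) (y : Ed d) : 0 ≤ Φ y := hΦ.2.2.1 y

theorem map_zero (hΦ : IsNInf Φ) : Φ 0 = 0 := hΦ.2.2.2.1

theorem pos (hΦ : IsNInf Φ) {y : Ed d} (hy : y ≠ 0) : 0 < Φ y := hΦ.2.2.2.2.1 y hy

theorem map_neg (hΦ : IsNInf Φ) (y : Ed d) : Φ (-y) = Φ y := hΦ.2.2.2.2.2.1 y

theorem map_smul_le (hΦ : IsNInf Φ) {s : ℝ} (hs0 : 0 ≤ s) (hs1 : s ≤ 1) (y : Ed d) :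
    Φ (s • y) ≤ s * Φ y :=
  hΦ.convexOn.map_smul_le_of_map_zero hΦ.map_zero hs0 hs1 y

theorem tendsto_zero_of_tendsto_map (hΦ : IsNInf Φ) {ι : Type*} {l : Filter ι} {y : ι → Ed d}
    (hy : Tendsto (fun i => Φ (y i)) l (𝓝 0)) : Tendsto y l (𝓝 0) :=
  hΦ.convexOn.tendsto_zero_of_tendsto_map hΦ.continuous hΦ.map_zero (fun _ => hΦ.pos) hy

end IsNInf

section Modular

variable {T : ℝ} {Φ : Ed d → ℝ} {f g w : ℝ → Ed d}

theorem rhoE_smul_le (hΦ : IsNInf Φ) {s : ℝ} (hs0 : 0 ≤ s) (hs1 : s ≤ 1) (w : ℝ → Ed d) :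
    rhoE T Φ (fun t => s • w t) ≤ ENNReal.ofReal s * rhoE T Φ w := by
  rw [rhoE, rhoE, ← lintegral_const_mul' _ _ ENNReal.ofReal_ne_top]
  refine lintegral_mono fun t => ?_
  rw [← ENNReal.ofReal_mul hs0]
  exact ENNReal.ofReal_le_ofReal (hΦ.map_smul_le hs0 hs1 _)

theorem rhoE_smul_mono (hΦ : IsNInf Φ) {s s' : ℝ} (hs : 0 ≤ s) (hss' : s ≤ s')
    (w : ℝ → Ed d) : rhoE T Φ (fun t => s • w t) ≤ rhoE T Φ (fun t => s' • w t) := by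
  rcases hs.eq_or_lt with rfl | hs
  · simp [rhoE, hΦ.map_zero]
  have hs' : 0 < s' := hs.trans_le hss'
  have hrescale : (fun t => s • w t) = fun t => (s / s') • (s' • w t) := by
    funext t; rw [smul_smul, div_mul_cancel₀ _ hs'.ne']
  have hle : s / s' ≤ 1 := (div_le_one hs').2 hss'
  calc rhoE T Φ (fun t => s • w t)
      ≤ ENNReal.ofReal (s / s') * rhoE T Φ (fun t => s' • w t) := by
        rw [hrescale]; exact rhoE_smul_le hΦ (by positivity) hle _
    _ ≤ rhoE T Φ (fun t => s' • w t) :=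
        mul_le_of_le_one_left' (ENNReal.ofReal_le_one.2 hle)

theorem rhoE_half_smul_sub_le (hΦ : IsNInf Φ)
    (hf : AEMeasurable f (volume.restrict (Icc 0 T))) :
    rhoE T Φ (fun t => (2⁻¹ : ℝ) • (f t - g t)) ≤ rhoE T Φ f + rhoE T Φ g := by
  have hpt : ∀ t, Φ ((2⁻¹ : ℝ) • (f t - g t)) ≤ Φ (f t) + Φ (g t) := fun t => by
    have h := hΦ.convexOn.2 (mem_univ (f t)) (mem_univ (-g t)) (by norm_num : (0 : ℝ) ≤ 2⁻¹)
      (by norm_num : (0 : ℝ) ≤ 2⁻¹) (by norm_num)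
    rw [← smul_add, ← sub_eq_add_neg, smul_eq_mul, smul_eq_mul, hΦ.map_neg] at h
    linarith [hΦ.nonneg (f t), hΦ.nonneg (g t)]
  calc rhoE T Φ (fun t => (2⁻¹ : ℝ) • (f t - g t))
      ≤ ∫⁻ t in Icc 0 T, (ENNReal.ofReal (Φ (f t)) + ENNReal.ofReal (Φ (g t))) :=
        lintegral_mono fun t => (ENNReal.ofReal_le_ofReal (hpt t)).trans ENNReal.ofReal_add_le
    _ = rhoE T Φ f + rhoE T Φ g :=
        lintegral_add_left' (hΦ.continuous.measurable.comp_aemeasurable hf).ennreal_ofReal _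

theorem rhoE_lt_top_of_norm_le (hΦ : Continuous Φ) {C : ℝ} (hw : ∀ t, ‖w t‖ ≤ C) :
    rhoE T Φ w < ⊤ := by
  obtain ⟨M, hM⟩ := hΦ.exists_forall_le_of_norm_le C
  calc rhoE T Φ w ≤ ∫⁻ _ in Icc 0 T, ENNReal.ofReal M :=
        lintegral_mono fun t => ENNReal.ofReal_le_ofReal (hM _ (hw t))
    _ < ⊤ := by
        rw [setLIntegral_const]
        exact ENNReal.mul_lt_top ENNReal.ofReal_lt_top measure_Icc_lt_top

theorem integrableOn_of_rhoE_lt_top (hΦ : IsNInf Φ)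
    (hw : AEMeasurable w (volume.restrict (Icc 0 T))) (hρ : rhoE T Φ w < ⊤) :
    IntegrableOn (fun t => Φ (w t)) (Icc 0 T) := by
  have h := integrable_toReal_of_lintegral_ne_top
    (hΦ.continuous.measurable.comp_aemeasurable hw).ennreal_ofReal hρ.ne
  simpa only [IntegrableOn, Function.comp_apply, ENNReal.toReal_ofReal (hΦ.nonneg _)] using h

theorem memLphi_of_norm_le (hΦ : Continuous Φ)
    (hw : AEMeasurable w (volume.restrict (Icc 0 T))) {C : ℝ} (hC : ∀ t, ‖w t‖ ≤ C) :
    MemLphi T Φ w :=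
  ⟨hw, 1, one_pos, rhoE_lt_top_of_norm_le hΦ (C := C) (by simpa using hC)⟩

theorem MemLphi.sub (hΦ : IsNInf Φ) (hf : MemLphi T Φ f) (hg : MemLphi T Φ g) :
    MemLphi T Φ (fun t => f t - g t) := by
  obtain ⟨hfm, l₁, hl₁, hf₁⟩ := hf
  obtain ⟨hgm, l₂, hl₂, hg₂⟩ := hg
  set l := min l₁ l₂
  have hl : 0 < l := lt_min hl₁ hl₂
  refine ⟨hfm.sub hgm, 2⁻¹ * l, by positivity, ?_⟩
  calc rhoE T Φ (fun t => (2⁻¹ * l) • (f t - g t))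
      = rhoE T Φ (fun t => (2⁻¹ : ℝ) • (l • f t - l • g t)) := by
        simp only [smul_sub, smul_smul]
    _ ≤ rhoE T Φ (fun t => l • f t) + rhoE T Φ (fun t => l • g t) :=
        rhoE_half_smul_sub_le hΦ (hfm.const_smul l)
    _ < ⊤ := ENNReal.add_lt_top.2
        ⟨(rhoE_smul_mono hΦ hl.le (min_le_left _ _) f).trans_lt hf₁,
          (rhoE_smul_mono hΦ hl.le (min_le_right _ _) g).trans_lt hg₂⟩

theorem MemLphi.exists_rhoE_inv_smul_le_one (hΦ : IsNInf Φ) (hw : MemLphi T Φ w) :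
    ∃ l : ℝ, 0 < l ∧ rhoE T Φ (fun t => l⁻¹ • w t) ≤ 1 := by
  obtain ⟨-, c, hc, hρ⟩ := hw
  set ρ := rhoE T Φ (fun t => c • w t)
  set s := (ρ.toReal + 1)⁻¹
  have hs1 : s ≤ 1 := inv_le_one_of_one_le₀ (by linarith [ρ.toReal_nonneg])
  refine ⟨(s * c)⁻¹, by positivity, ?_⟩
  calc rhoE T Φ (fun t => (s * c)⁻¹⁻¹ • w t) = rhoE T Φ (fun t => s • c • w t) := by
        simp only [inv_inv, smul_smul]
    _ ≤ ENNReal.ofReal s * ENNReal.ofReal ρ.toReal := by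
        rw [ENNReal.ofReal_toReal hρ.ne]; exact rhoE_smul_le hΦ (by positivity) hs1 _
    _ = ENNReal.ofReal (ρ.toReal / (ρ.toReal + 1)) := by
        rw [← ENNReal.ofReal_mul (by positivity), div_eq_inv_mul]
    _ ≤ 1 := ENNReal.ofReal_le_one.2 ((div_le_one (by positivity)).2 (by linarith))

theorem luxNorm_nonneg (w : ℝ → Ed d) : 0 ≤ luxNorm T Φ w :=
  Real.sInf_nonneg fun _ hl => hl.1.le

theorem MemLphi.rhoE_inv_smul_le_one_of_luxNorm_lt (hΦ : IsNInf Φ) (hw : MemLphi T Φ w)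
    {r : ℝ} (hr : luxNorm T Φ w < r) : rhoE T Φ (fun t => r⁻¹ • w t) ≤ 1 := by
  obtain ⟨l, ⟨hl, hρ⟩, hlr⟩ := exists_lt_of_csInf_lt (hw.exists_rhoE_inv_smul_le_one hΦ) hr
  exact (rhoE_smul_mono hΦ (inv_nonneg.2 (hl.trans hlr).le) (inv_anti₀ hl hlr.le) w).trans hρ

theorem exists_strictMono_rhoE_inv_smul_sub_le_one (hΦ : IsNInf Φ) {u : ℝ → Ed d}
    {un : ℕ → ℝ → Ed d} (hu : MemLphi T Φ u) (hun : ∀ n, MemLphi T Φ (un n))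
    (hconv : Tendsto (fun n => luxNorm T Φ (fun t => un n t - u t)) atTop (𝓝 0))
    {ε : ℕ → ℝ} (hε : ∀ k, 0 < ε k) :
    ∃ φ : ℕ → ℕ, StrictMono φ ∧ ∀ k, rhoE T Φ (fun t => (ε k)⁻¹ • (un (φ k) t - u t)) ≤ 1 := by
  obtain ⟨φ, hφ, hφε⟩ := extraction_forall_of_eventually
    (P := fun k n => luxNorm T Φ (fun t => un n t - u t) < ε k)
    fun k => hconv.eventually_lt_const (hε k)
  exact ⟨φ, hφ, fun k => ((hun (φ k)).sub hΦ hu).rhoE_inv_smul_le_one_of_luxNorm_lt hΦ (hφε k)⟩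

theorem exists_bounded_luxNorm_sub_lt {u : ℝ → Ed d} {r : ℝ} (hu : distLinf T Φ u < r) :
    ∃ v : ℝ → Ed d, Measurable v ∧ (∃ C : ℝ, ∀ t, ‖v t‖ ≤ C) ∧
      luxNorm T Φ (fun t => u t - v t) < r := by
  rw [distLinf] at hu
  obtain ⟨_, ⟨v, hv, hC, rfl⟩, hlt⟩ :=
    exists_lt_of_csInf_lt (by exact ⟨_, 0, measurable_const, ⟨0, fun _ => by simp⟩, rfl⟩) hu
  exact ⟨v, hv, hC, hlt⟩

theorem exists_integrableOn_majorant_geometric_smul (hΦ : IsNInf Φ) {z : ℕ → ℝ → Ed d}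
    (hz : ∀ k, AEMeasurable (z k) (volume.restrict (Icc 0 T)))
    (hρ : ∀ k, rhoE T Φ (z k) ≤ 1) :
    ∃ h : ℝ → ℝ, IntegrableOn h (Icc 0 T) ∧ ∀ᵐ t ∂(volume.restrict (Icc 0 T)),
      (∀ k, Φ ((2⁻¹ : ℝ) ^ k • z k t) ≤ h t) ∧
        Tendsto (fun k => (2⁻¹ : ℝ) ^ k • z k t) atTop (𝓝 0) := by
  have hF : ∀ k, AEMeasurable (fun t => ENNReal.ofReal (Φ ((2⁻¹ : ℝ) ^ k • z k t)))
      (volume.restrict (Icc 0 T)) := fun k =>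
    (hΦ.continuous.measurable.comp_aemeasurable
      ((hz k).const_smul ((2⁻¹ : ℝ) ^ k))).ennreal_ofReal
  have hterm : ∀ k, rhoE T Φ (fun t => (2⁻¹ : ℝ) ^ k • z k t) ≤ (2⁻¹ : ℝ≥0∞) ^ k := fun k =>
    calc rhoE T Φ (fun t => (2⁻¹ : ℝ) ^ k • z k t)
        ≤ ENNReal.ofReal ((2⁻¹ : ℝ) ^ k) * rhoE T Φ (z k) :=
          rhoE_smul_le hΦ (by positivity) (pow_le_one₀ (by norm_num) (by norm_num)) (z k)
      _ ≤ (2⁻¹ : ℝ≥0∞) ^ k := by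
          rw [ENNReal.ofReal_pow (by norm_num), ENNReal.ofReal_inv_of_pos two_pos,
            ENNReal.ofReal_ofNat]
          exact mul_le_of_le_one_right' (hρ k)
  have hsum : ∑' k, rhoE T Φ (fun t => (2⁻¹ : ℝ) ^ k • z k t) ≠ ⊤ :=
    ne_top_of_le_ne_top (by simp [ENNReal.tsum_geometric]) (ENNReal.tsum_le_tsum hterm)
  obtain ⟨h, hint, hae⟩ := exists_integrable_majorant_of_tsum_lintegral_ne_top hF hsum
  refine ⟨h, hint, ?_⟩
  filter_upwards [hae] with t ⟨hle, hlim⟩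
  simp only [ENNReal.toReal_ofReal (hΦ.nonneg _)] at hle hlim
  exact ⟨hle, hΦ.tendsto_zero_of_tendsto_map hlim⟩

theorem exists_strictMono_ae_tendsto_and_majorant (hΦ : IsNInf Φ) {u : ℝ → Ed d}
    {un : ℕ → ℝ → Ed d} (hu : MemLphi T Φ u) (hun : ∀ n, MemLphi T Φ (un n))
    (hconv : Tendsto (fun n => luxNorm T Φ (fun t => un n t - u t)) atTop (𝓝 0))
    {c : ℝ} (hc : 0 < c) :
    ∃ φ : ℕ → ℕ, StrictMono φ ∧ ∃ g : ℝ → ℝ, IntegrableOn g (Icc 0 T) ∧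
      ∀ᵐ t ∂(volume.restrict (Icc 0 T)), (∀ k, Φ (c • (un (φ k) t - u t)) ≤ g t) ∧
        Tendsto (fun k => un (φ k) t) atTop (𝓝 (u t)) := by
  obtain ⟨φ, hφ, hρz⟩ := exists_strictMono_rhoE_inv_smul_sub_le_one hΦ hu hun hconv
    (ε := fun k => c⁻¹ * 2⁻¹ ^ k) fun k => by positivity
  obtain ⟨g, hg, hgz⟩ := exists_integrableOn_majorant_geometric_smul hΦ
    (z := fun k t => (c⁻¹ * 2⁻¹ ^ k)⁻¹ • (un (φ k) t - u t))
    (fun k => ((hun (φ k)).1.sub hu.1).const_smul (c⁻¹ * 2⁻¹ ^ k)⁻¹) hρz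
  have hz : ∀ k t, (2⁻¹ : ℝ) ^ k • (c⁻¹ * 2⁻¹ ^ k)⁻¹ • (un (φ k) t - u t)
      = c • (un (φ k) t - u t) := fun k t => by
    rw [smul_smul]; congr 1; field_simp
  refine ⟨φ, hφ, g, hg, ?_⟩
  filter_upwards [hgz] with t ⟨hle, hlim⟩
  simp only [hz] at hle hlim
  refine ⟨hle, ?_⟩
  have hlim' := tendsto_const_nhds (x := u t) |>.add (hlim.const_smul c⁻¹)
  rw [smul_zero, add_zero] at hlim'
  refine hlim'.congr fun k => ?_
  rw [smul_smul, inv_mul_cancel₀ hc.ne', one_smul, add_sub_cancel]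

end Modular

theorem statement12_general {d : ℕ} (T : ℝ) (Φ : Ed d → ℝ) (hΦ : IsNInf Φ)
    (lam : ℝ) (u : ℝ → Ed d) (hu : MemLphi T Φ u)
    (hud : distLinf T Φ u < lam)
    (un : ℕ → ℝ → Ed d) (hun : ∀ n, MemLphi T Φ (un n))
    (hconv : Tendsto (fun n => luxNorm T Φ (fun t => un n t - u t)) atTop (nhds 0)) :
    ∃ φ : ℕ → ℕ, StrictMono φ ∧ ∃ h : ℝ → ℝ, IntegrableOn h (Icc (0:ℝ) T) ∧
      (∀ᵐ t ∂(volume.restrict (Icc (0:ℝ) T)),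
        Tendsto (fun k => un (φ k) t) atTop (nhds (u t))) ∧
      ∀ᵐ t ∂(volume.restrict (Icc (0:ℝ) T)), ∀ k, Φ (lam⁻¹ • un (φ k) t) ≤ h t := by
  obtain ⟨v, hvm, ⟨C, hvC⟩, hv⟩ := exists_bounded_luxNorm_sub_lt hud
  obtain ⟨μ, hvμ, hμlam⟩ := exists_between hv
  have hμ : 0 < μ := (luxNorm_nonneg _).trans_lt hvμ
  obtain ⟨δ, hδ, rfl⟩ : ∃ δ, 0 < δ ∧ lam = μ + δ := ⟨lam - μ, by linarith, by ring⟩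
  have huv : MemLphi T Φ (fun t => u t - v t) :=
    hu.sub hΦ (memLphi_of_norm_le hΦ.continuous hvm.aemeasurable hvC)
  have hρuv := huv.rhoE_inv_smul_le_one_of_luxNorm_lt hΦ hvμ
  obtain ⟨φ, hφ, g, hg, hgae⟩ :=
    exists_strictMono_ae_tendsto_and_majorant hΦ hu hun hconv (inv_pos.2 (half_pos hδ))
  obtain ⟨M, hM⟩ := hΦ.continuous.exists_forall_le_of_norm_le ((δ / 2)⁻¹ * C)
  have hMv : ∀ t, Φ ((δ / 2)⁻¹ • v t) ≤ M := fun t => hM _ <| by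
    rw [norm_smul, Real.norm_of_nonneg (by positivity)]; gcongr; exact hvC t
  refine ⟨φ, hφ, fun t => μ / (μ + δ) * Φ (μ⁻¹ • (u t - v t)) + δ / (μ + δ) * ((M + g t) / 2),
    ?_, hgae.mono fun t ht => ht.2, ?_⟩
  · exact ((integrableOn_of_rhoE_lt_top hΦ (huv.1.const_smul μ⁻¹)
      (hρuv.trans_lt ENNReal.one_lt_top)).const_mul _).add
      ((((integrableOn_const measure_Icc_lt_top.ne).add hg).div_const 2).const_mul _)
  · filter_upwards [hgae] with t ht k
    calc Φ ((μ + δ)⁻¹ • un (φ k) t)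
        = Φ ((μ + δ)⁻¹ • ((u t - v t) + v t + (un (φ k) t - u t))) := by congr 2; abel
      _ ≤ _ := hΦ.convexOn.map_inv_smul_add_add_le hμ hδ _ _ _
      _ ≤ _ := by gcongr; exacts [hMv t, ht.1 k]

/-- If `u ∈ L^Φ` with `d(u, L^∞) < λ` and `‖u_n − u‖_{L^Φ} → 0`,
then some subsequence `u_{n_k}` converges to `u` a.e. and satisfies
`Φ(u_{n_k}/λ) ≤ h` a.e. for a fixed `h ∈ L¹`. -/
theorem statement12 {d : ℕ} (T : ℝ) (hT : 0 < T) (Φ : Ed d → ℝ) (hΦ : IsNInf Φ)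
    (lam : ℝ) (hlam : 0 < lam) (u : ℝ → Ed d) (hu : MemLphi T Φ u)
    (hud : distLinf T Φ u < lam)
    (un : ℕ → ℝ → Ed d) (hun : ∀ n, MemLphi T Φ (un n))
    (hconv : Tendsto (fun n => luxNorm T Φ (fun t => un n t - u t)) atTop (nhds 0)) :
    ∃ φ : ℕ → ℕ, StrictMono φ ∧ ∃ h : ℝ → ℝ, IntegrableOn h (Icc (0:ℝ) T) ∧
      (∀ᵐ t ∂(volume.restrict (Icc (0:ℝ) T)),
        Tendsto (fun k => un (φ k) t) atTop (nhds (u t))) ∧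
      ∀ᵐ t ∂(volume.restrict (Icc (0:ℝ) T)), ∀ k, Φ (lam⁻¹ • un (φ k) t) ≤ h t :=
  statement12_general T Φ hΦ lam u hu hud un hun hconv
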